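/- arXiv:2409.05561 — 2 statements merged into one kernel-verified Lean document; each statement's English description precedes it below -/
import Mathlib

section
/- Let C be an additive category with finite biproducts, and suppose given objects A₂, A₃, A₄, B₁, B₂, B₃, C₂ and morphisms a₂ : A₂ → A₃, a₃ : A₃ → A₄, f₂ : A₂ → B₂, f₃ : A₃ → B₃, b₁ : B₁ → B₂, b₂ : B₂ → B₃, c₁ : B₁ → C₂, h₃ : A₃ → C₂, g₂ : B₂ → C₂. If the morphism δ₁ = [[−a₃, 0, 0], [f₃, −b₂, 0], [h₃, g₂, c₁]] : A₃ ⊕ B₂ ⊕ B₁ → A₄ ⊕ B₃ ⊕ C₂ is a weak cokernel of δ₀ = [[−a₂, 0], [−f₂, −b₁], [0, 1]] : A₂ ⊕ B₁ → A₃ ⊕ B₂ ⊕ B₁, then the morphism [[−a₃, 0], [f₃, −b₂], [h₃, g₂]] : A₃ ⊕ B₂ → A₄ ⊕ B₃ ⊕ C₂ is a weak cokernel of [a₂; f₂] : A₂ → A₃ ⊕ B₂ (the morphism with components a₂ and f₂). -/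
open CategoryTheory CategoryTheory.Limits

attribute [local instance] CategoryTheory.Limits.hasBinaryBiproducts_of_finite_biproducts

namespace NAng

/-- `g : B ⟶ D` is a weak cokernel of `f : A ⟶ B`. -/
def IsWeakCokernel {C : Type*} [Category C] [Limits.HasZeroMorphisms C]
    {A B D : C} (f : A ⟶ B) (g : B ⟶ D) : Prop :=
  f ≫ g = 0 ∧ ∀ ⦃Y : C⦄ (h : B ⟶ Y), f ≫ h = 0 → ∃ s : D ⟶ Y, g ≫ s = h

/-- **Statement 10.** If `δ₁ = [[-a₃,0,0],[f₃,-b₂,0],[h₃,g₂,c₁]] : A₃⊕B₂⊕B₁ → A₄⊕B₃⊕C₂`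
is a weak cokernel of `δ₀ = [[-a₂,0],[-f₂,-b₁],[0,1]] : A₂⊕B₁ → A₃⊕B₂⊕B₁`, then
`[[-a₃,0],[f₃,-b₂],[h₃,g₂]] : A₃⊕B₂ → A₄⊕B₃⊕C₂` is a weak cokernel of
`[a₂;f₂] : A₂ → A₃⊕B₂`. -/
theorem weakCokernel_of_weakCokernel_matrix
    {C : Type*} [Category C] [Preadditive C] [HasFiniteBiproducts C]
    {A₂ A₃ A₄ B₁ B₂ B₃ C₂ : C}
    (a₂ : A₂ ⟶ A₃) (a₃ : A₃ ⟶ A₄) (f₂ : A₂ ⟶ B₂) (f₃ : A₃ ⟶ B₃)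
    (b₁ : B₁ ⟶ B₂) (b₂ : B₂ ⟶ B₃) (c₁ : B₁ ⟶ C₂) (h₃ : A₃ ⟶ C₂) (g₂ : B₂ ⟶ C₂)
    (hwc : IsWeakCokernel
      (biprod.desc (biprod.lift (-a₂) (biprod.lift (-f₂) 0))
        (biprod.lift 0 (biprod.lift (-b₁) (𝟙 B₁))) :
        A₂ ⊞ B₁ ⟶ A₃ ⊞ (B₂ ⊞ B₁))
      (biprod.desc (biprod.lift (-a₃) (biprod.lift f₃ h₃))
        (biprod.desc (biprod.lift 0 (biprod.lift (-b₂) g₂))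
          (biprod.lift 0 (biprod.lift 0 c₁))) :
        A₃ ⊞ (B₂ ⊞ B₁) ⟶ A₄ ⊞ (B₃ ⊞ C₂))) :
    IsWeakCokernel
      (biprod.lift a₂ f₂ : A₂ ⟶ A₃ ⊞ B₂)
      (biprod.desc (biprod.lift (-a₃) (biprod.lift f₃ h₃))
        (biprod.lift 0 (biprod.lift (-b₂) g₂)) :
        A₃ ⊞ B₂ ⟶ A₄ ⊞ (B₃ ⊞ C₂)) := by
  obtain ⟨hz, hlift⟩ := hwc
  have e1 : a₂ ≫ a₃ = 0 := by
    have := congrArg (fun t => biprod.inl ≫ t ≫ biprod.fst) hz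
    simpa using this
  have e2 : a₂ ≫ f₃ = f₂ ≫ b₂ := by
    have t := congrArg (fun t => biprod.inl ≫ t ≫ biprod.snd ≫ biprod.fst) hz
    simp at t
    rwa [neg_add_eq_zero] at t
  have e3 : a₂ ≫ h₃ = -(f₂ ≫ g₂) := by
    have t := congrArg (fun t => biprod.inl ≫ t ≫ biprod.snd ≫ biprod.snd) hz
    simp at t
    rw [neg_add_eq_zero] at t
    simpa using t
  constructor
  · apply biprod.hom_ext <;> [skip; apply biprod.hom_ext] <;>
      simp [e1, e2, e3]
  · intro Y h hh
    have hh1 : a₂ ≫ (biprod.inl ≫ h) + f₂ ≫ (biprod.inr ≫ h) = 0 := by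
      simpa [biprod.lift_eq, Preadditive.add_comp] using hh
    set H : A₃ ⊞ (B₂ ⊞ B₁) ⟶ Y :=
      biprod.desc (biprod.inl ≫ h)
        (biprod.desc (biprod.inr ≫ h) (b₁ ≫ biprod.inr ≫ h)) with hH
    have hH0 : (biprod.desc (biprod.lift (-a₂) (biprod.lift (-f₂) 0))
        (biprod.lift 0 (biprod.lift (-b₁) (𝟙 B₁))) :
        A₂ ⊞ B₁ ⟶ A₃ ⊞ (B₂ ⊞ B₁)) ≫ H = 0 := by
      apply biprod.hom_ext' <;> simp [hH]
      · linear_combination (norm := (simp; abel)) -hh1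
    obtain ⟨s, hs⟩ := hlift H hH0
    refine ⟨s, ?_⟩
    have hs1 := congrArg (fun t => biprod.inl ≫ t) hs
    have hs2 := congrArg (fun t => (biprod.inl ≫ biprod.inr :
      B₂ ⟶ A₃ ⊞ (B₂ ⊞ B₁)) ≫ t) hs
    simp [hH] at hs1 hs2
    apply biprod.hom_ext' <;> simp [hs1, hs2]


end NAng
end

section
/- Let C be an additive category with finite biproducts, and suppose given objects A₃, A₄, A₅, B₁, B₂, B₃, B₄, C₂, C₃ and morphisms a₃ : A₃ → A₄, a₄ : A₄ → A₅, f₃ : A₃ → B₃, f₄ : A₄ → B₄, b₁ : B₁ → B₂, b₂ : B₂ → B₃, b₃ : B₃ → B₄, c₁ : B₁ → C₂, c₂ : C₂ → C₃, h₃ : A₃ → C₂, h₄ : A₄ → C₃, g₂ : B₂ → C₂, g₃ : B₃ → C₃, satisfying b₂b₁ = 0 and g₂b₁ = c₁. If the morphism δ₂ = [[−a₄, 0, 0], [−f₄, −b₃, 0], [h₄, g₃, c₂]] : A₄ ⊕ B₃ ⊕ C₂ → A₅ ⊕ B₄ ⊕ C₃ is a weak cokernel of δ₁ = [[−a₃,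 0, 0], [f₃, −b₂, 0], [h₃, g₂, c₁]] : A₃ ⊕ B₂ ⊕ B₁ → A₄ ⊕ B₃ ⊕ C₂, then δ₂ is a weak cokernel of the morphism [[−a₃, 0], [f₃, −b₂], [h₃, g₂]] : A₃ ⊕ B₂ → A₄ ⊕ B₃ ⊕ C₂. -/
open CategoryTheory CategoryTheory.Limits

attribute [local instance] CategoryTheory.Limits.hasBinaryBiproducts_of_finite_biproducts

namespace NAng

/-- **Statement 11.** Suppose `b₂b₁ = 0` and `g₂b₁ = c₁`.  If
`δ₂ = [[-a₄,0,0],[-f₄,-b₃,0],[h₄,g₃,c₂]] : A₄⊕B₃⊕C₂ → A₅⊕B₄⊕C₃` is a weak cokernel of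
`δ₁ = [[-a₃,0,0],[f₃,-b₂,0],[h₃,g₂,c₁]] : A₃⊕B₂⊕B₁ → A₄⊕B₃⊕C₂`, then `δ₂` is a weak
cokernel of `[[-a₃,0],[f₃,-b₂],[h₃,g₂]] : A₃⊕B₂ → A₄⊕B₃⊕C₂`. -/
theorem weakCokernel_restrict_matrix
    {C : Type*} [Category C] [Preadditive C] [HasFiniteBiproducts C]
    {A₃ A₄ A₅ B₁ B₂ B₃ B₄ C₂ C₃ : C}
    (a₃ : A₃ ⟶ A₄) (a₄ : A₄ ⟶ A₅) (f₃ : A₃ ⟶ B₃) (f₄ : A₄ ⟶ B₄)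
    (b₁ : B₁ ⟶ B₂) (b₂ : B₂ ⟶ B₃) (b₃ : B₃ ⟶ B₄)
    (c₁ : B₁ ⟶ C₂) (c₂ : C₂ ⟶ C₃)
    (h₃ : A₃ ⟶ C₂) (h₄ : A₄ ⟶ C₃) (g₂ : B₂ ⟶ C₂) (g₃ : B₃ ⟶ C₃)
    (hbb : b₁ ≫ b₂ = 0) (hgb : b₁ ≫ g₂ = c₁)
    (hwc : IsWeakCokernel
      (biprod.desc (biprod.lift (-a₃) (biprod.lift f₃ h₃))
        (biprod.desc (biprod.lift 0 (biprod.lift (-b₂) g₂))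
          (biprod.lift 0 (biprod.lift 0 c₁))) :
        A₃ ⊞ (B₂ ⊞ B₁) ⟶ A₄ ⊞ (B₃ ⊞ C₂))
      (biprod.desc (biprod.lift (-a₄) (biprod.lift (-f₄) h₄))
        (biprod.desc (biprod.lift 0 (biprod.lift (-b₃) g₃))
          (biprod.lift 0 (biprod.lift 0 c₂))) :
        A₄ ⊞ (B₃ ⊞ C₂) ⟶ A₅ ⊞ (B₄ ⊞ C₃))) :
    IsWeakCokernel
      (biprod.desc (biprod.lift (-a₃) (biprod.lift f₃ h₃))
        (biprod.lift 0 (biprod.lift (-b₂) g₂)) :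
        A₃ ⊞ B₂ ⟶ A₄ ⊞ (B₃ ⊞ C₂))
      (biprod.desc (biprod.lift (-a₄) (biprod.lift (-f₄) h₄))
        (biprod.desc (biprod.lift 0 (biprod.lift (-b₃) g₃))
          (biprod.lift 0 (biprod.lift 0 c₂))) :
        A₄ ⊞ (B₃ ⊞ C₂) ⟶ A₅ ⊞ (B₄ ⊞ C₃)) := by
  set δ' : A₃ ⊞ B₂ ⟶ A₄ ⊞ (B₃ ⊞ C₂) :=
    biprod.desc (biprod.lift (-a₃) (biprod.lift f₃ h₃))
      (biprod.lift 0 (biprod.lift (-b₂) g₂)) with hδ'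
  set δ₁ : A₃ ⊞ (B₂ ⊞ B₁) ⟶ A₄ ⊞ (B₃ ⊞ C₂) :=
    biprod.desc (biprod.lift (-a₃) (biprod.lift f₃ h₃))
      (biprod.desc (biprod.lift 0 (biprod.lift (-b₂) g₂))
        (biprod.lift 0 (biprod.lift 0 c₁))) with hδ₁
  have hq : (biprod.map (𝟙 A₃) (biprod.desc (𝟙 B₂) b₁)) ≫ δ' = δ₁ := by
    ext <;> simp [hδ', hδ₁, hbb, hgb]
  have hr : (biprod.map (𝟙 A₃) (biprod.inl : B₂ ⟶ B₂ ⊞ B₁)) ≫ δ₁ = δ' := by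
    apply biprod.hom_ext' <;> simp [hδ', hδ₁]
  constructor
  · rw [← hr, Category.assoc, hwc.1, comp_zero]
  · intro Y h hh
    refine hwc.2 h ?_
    rw [← hq, Category.assoc, hh, comp_zero]

end NAng
end
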